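/- Let X_1, X_2, … be i.i.d. real random variables whose common logarithmic moment generating function Λ(t) = log E[exp(t X_1)] is finite for all t ∈ ℝ, with Cramér rate function I(x) = sup_{t ∈ ℝ} (t x − Λ(t)). Then for every x < E[X_1] and every n ≥ 1, P(X_1 + ⋯ + X_n ≤ n x) ≤ exp(−n I(x)). -/

import Mathlib

open MeasureTheory ProbabilityTheory
open scoped ENNReal

/-- The Cramér rate function `I(x) = ⨆ t, (t x - Λ(t))`, as a function `ℝ → [0, ∞] ⊆ EReal`,
where `Λ = cgf X μ` is the logarithmic moment generating function `t ↦ log E[exp (t X)]`. -/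
noncomputable def cramerRate {Ω : Type*} [MeasurableSpace Ω] (X : Ω → ℝ) (μ : Measure Ω)
    (x : ℝ) : EReal :=
  ⨆ t : ℝ, ((t * x - cgf X μ t : ℝ) : EReal)

/-!
For `t ≤ 0`, Markov's inequality applied to `exp (t Sₙ)` (the Chernoff bound) together with
`Λ_{Sₙ} = n Λ` for i.i.d. summands gives `P(Sₙ ≤ n x) ≤ exp (-n (t x - Λ(t)))`. For `t ≥ 0`,
Jensen's inequality gives `t x ≤ t E[X₁] ≤ Λ(t)` when `x < E[X₁]`, so the same bound holds
trivially. Taking the infimum over `t` of the right-hand side gives `exp (-n I(x))`.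
-/

open Real Finset

theorem ENNReal.le_exp_neg_mul_iSup_iff {ι : Type*} {p : ℝ≥0∞} {c : ℝ} (hc : 0 < c)
    (f : ι → EReal) :
    p ≤ EReal.exp (-(c * ⨆ i, f i)) ↔ ∀ i, p ≤ EReal.exp (-(c * f i)) := by
  have hc₀ : (0 : EReal) < c := by exact_mod_cast hc
  have hc_top : (c : EReal) ≠ ⊤ := EReal.coe_ne_top c
  have h_le_exp (y : EReal) : p ≤ EReal.exp y ↔ log p ≤ y := by
    rw [← ENNReal.exp_log p, EReal.exp_le_exp_iff, ENNReal.exp_log]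
  simp only [h_le_exp, EReal.le_neg, mul_comm (c : EReal), ← EReal.le_div_iff_mul_le hc₀ hc_top,
    iSup_le_iff]

namespace ProbabilityTheory

variable {Ω ι : Type*} {mΩ : MeasurableSpace Ω} {μ : Measure Ω} {X : Ω → ℝ} {t : ℝ}

lemma integrable_of_integrable_exp_mul (h_int : ∀ t, Integrable (fun ω ↦ exp (t * X ω)) μ) :
    Integrable X μ :=
  integrable_of_mem_interior_integrableExpSet (by simp [integrableExpSet, h_int])

lemma exp_mul_integral_le_mgf [IsProbabilityMeasure μ] (hX : Integrable X μ)
    (h_int : Integrable (fun ω ↦ exp (t * X ω)) μ) : exp (t * μ[X]) ≤ mgf X μ t := by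
  rw [← integral_const_mul]
  exact convexOn_exp.map_integral_le continuous_exp.continuousOn isClosed_univ
    (ae_of_all _ fun _ ↦ Set.mem_univ _) (hX.const_mul t) h_int

lemma mul_le_cgf_of_le_integral [IsProbabilityMeasure μ] (hX : Integrable X μ)
    (h_int : Integrable (fun ω ↦ exp (t * X ω)) μ) (ht : 0 ≤ t) {x : ℝ} (hx : x ≤ μ[X]) :
    t * x ≤ cgf X μ t :=
  calc t * x ≤ t * μ[X] := mul_le_mul_of_nonneg_left hx ht
    _ ≤ cgf X μ t := (le_log_iff_exp_le (mgf_pos h_int)).mpr (exp_mul_integral_le_mgf hX h_int)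

lemma cgf_sum_of_identDistrib {X : ι → Ω → ℝ} {s : Finset ι} {j : ι}
    (h_meas : ∀ i, AEMeasurable (X i) μ) (h_indep : iIndepFun X μ)
    (hident : ∀ i ∈ s, IdentDistrib (X i) (X j) μ μ) (t : ℝ) :
    cgf (∑ i ∈ s, X i) μ t = #s * cgf (X j) μ t := by
  rw [cgf, h_indep.mgf_sum₀ h_meas,
    prod_eq_pow_card fun i hi ↦ mgf_congr_of_identDistrib _ _ (hident i hi) t, log_pow, cgf]

lemma integrable_exp_mul_of_identDistrib {Y : Ω → ℝ} (hident : IdentDistrib X Y μ μ)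
    (h_int : Integrable (fun ω ↦ exp (t * Y ω)) μ) :
    Integrable (fun ω ↦ exp (t * X ω)) μ :=
  (hident.comp (measurable_const_mul t).exp).integrable_iff.mpr h_int

theorem measureReal_sum_le_le_exp_of_identDistrib [IsFiniteMeasure μ] {X : ι → Ω → ℝ}
    {s : Finset ι} {j : ι} (h_meas : ∀ i, Measurable (X i)) (h_indep : iIndepFun X μ)
    (hident : ∀ i ∈ s, IdentDistrib (X i) (X j) μ μ) (ht : t ≤ 0)
    (h_int : Integrable (fun ω ↦ exp (t * X j ω)) μ) (ε : ℝ) :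
    μ.real {ω | ∑ i ∈ s, X i ω ≤ ε} ≤ exp (-t * ε + #s * cgf (X j) μ t) := by
  have h_int_sum := h_indep.integrable_exp_mul_sum h_meas
    fun i hi ↦ integrable_exp_mul_of_identDistrib (hident i hi) h_int
  have h_chernoff := measure_le_le_exp_cgf ε ht h_int_sum
  simpa only [Finset.sum_apply,
    cgf_sum_of_identDistrib (fun i ↦ (h_meas i).aemeasurable) h_indep hident] using h_chernoff

end ProbabilityTheory

/-- Lower-tail Chernoff bound: if `X 0, X 1, …` are i.i.d. real random variables whose common
logarithmic moment generating function is finite everywhere, then for every `x < E[X 0]` and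
every `n ≥ 1`, `P(X 0 + ⋯ + X (n-1) ≤ n x) ≤ exp (- n I x)`, where `I` is the Cramér rate
function. -/
theorem measure_sum_le_le_exp_neg_rate {Ω : Type*} [MeasurableSpace Ω]
    (μ : Measure Ω) [IsProbabilityMeasure μ] (X : ℕ → Ω → ℝ)
    (hmeas : ∀ i, Measurable (X i))
    (hindep : iIndepFun X μ)
    (hident : ∀ i, IdentDistrib (X i) (X 0) μ μ)
    (hfin : ∀ t : ℝ, Integrable (fun ω => Real.exp (t * X 0 ω)) μ)
    (x : ℝ) (hx : x < μ[X 0]) (n : ℕ) (hn : 1 ≤ n) :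
    μ {ω | ∑ i ∈ Finset.range n, X i ω ≤ (n : ℝ) * x} ≤
      EReal.exp (-(((n : ℝ) : EReal) * cramerRate (X 0) μ x)) := by
  have hn₀ : (0 : ℝ) < n := by exact_mod_cast hn
  rw [cramerRate, ENNReal.le_exp_neg_mul_iSup_iff hn₀]
  intro t
  rw [← EReal.coe_mul, ← EReal.coe_neg, EReal.exp_coe, ← ofReal_measureReal]
  refine ENNReal.ofReal_le_ofReal ?_
  rcases le_total t 0 with ht | ht
  · calc μ.real {ω | ∑ i ∈ range n, X i ω ≤ n * x}
        ≤ exp (-t * (n * x) + #(range n) * cgf (X 0) μ t) :=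
          measureReal_sum_le_le_exp_of_identDistrib hmeas hindep (fun i _ ↦ hident i) ht
            (hfin t) _
      _ = exp (-(n * (t * x - cgf (X 0) μ t))) := by rw [card_range]; congr 1; ring
  · have h_rate_nonpos : t * x - cgf (X 0) μ t ≤ 0 := sub_nonpos.mpr <|
      mul_le_cgf_of_le_integral (integrable_of_integrable_exp_mul hfin) (hfin t) ht hx.le
    calc μ.real {ω | ∑ i ∈ range n, X i ω ≤ n * x} ≤ 1 := measureReal_le_one
      _ ≤ exp (-(n * (t * x - cgf (X 0) μ t))) :=
        one_le_exp (neg_nonneg.mpr (mul_nonpos_of_nonneg_of_nonpos hn₀.le h_rate_nonpos))
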